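/- arXiv:0906.4571 — 4 statements merged into one kernel-verified Lean document; each statement's English description precedes it below -/
import Mathlib

section
/- For every integer q > 2 with q ≠ 4, the degree of Q(sin(2π/q)) over Q equals (1/2)·φ(K), where K = 4q / gcd(4q, 4−q). -/
/-!
With `r = (q - 4) / (4q)` we have `sin (2π / q) = cos (π / 2 - 2π / q) = cos (2πr)`, and the
reduced denominator of `r` is `4q / gcd(4q, 4 - q)`. For a primitive `n`-th root of unity
`ζ = exp (2πia / n)`, the field `ℚ(cos (2πa / n)) = ℚ(ζ + ζ⁻¹)` is real while `ζ` is not, so `ζ`,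
a root of `X² - (ζ + ζ⁻¹) X + 1`, has degree exactly `2` over it. The tower law and
`[ℚ(ζ) : ℚ] = φ(n)` then give `[ℚ(cos (2πa / n)) : ℚ] = φ(n) / 2`.
-/

open Real IntermediateField Polynomial

namespace IntermediateField

theorem finrank_adjoin_simple_map {F E E' : Type*} [Field F] [Field E]
    [Field E'] [Algebra F E] [Algebra F E'] (f : E →ₐ[F] E') (x : E) :
    Module.finrank F F⟮f x⟯ = Module.finrank F F⟮x⟯ := by
  rw [← Set.image_singleton, ← adjoin_map]
  exact (equivMap _ f).toLinearEquiv.finrank_eq.symm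

theorem finrank_adjoin_eq_two_of_add_inv_mem {K L : Type*} [Field K] [Field L] [Algebra K L]
    {x : L} (hx : x ∉ (algebraMap K L).range) (hsum : x + x⁻¹ ∈ (algebraMap K L).range) :
    Module.finrank K K⟮x⟯ = 2 := by
  obtain ⟨c, hc⟩ := hsum
  have hx0 : x ≠ 0 := fun h ↦ hx ⟨0, by simp [h]⟩
  set p : K[X] := X ^ 2 - C c * X + 1
  have hp : p.natDegree = 2 := by unfold p; compute_degree!
  have hmonic : p.Monic := by unfold p; monicity!
  have hroot : aeval x p = 0 := by
    simp only [p, map_add, map_sub, map_mul, map_pow, aeval_X, aeval_C, map_one, hc]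
    field_simp
    ring
  have hint : IsIntegral K x := ⟨p, hmonic, hroot⟩
  rw [adjoin.finrank hint]
  refine le_antisymm ?_ ((minpoly.two_le_natDegree_iff hint).mpr hx)
  exact hp ▸ natDegree_le_natDegree (minpoly.min K x hmonic hroot)

theorem finrank_mul_two_of_add_inv_mem {F L : Type*} [Field F] [Field L]
    [Algebra F L] {E : IntermediateField F L} {x : L} (hxE : x ∉ E) (hsum : x + x⁻¹ ∈ E)
    (hle : E ≤ F⟮x⟯) : Module.finrank F E * 2 = Module.finrank F F⟮x⟯ := by
  have h2 : Module.finrank E E⟮x⟯ = 2 :=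
    finrank_adjoin_eq_two_of_add_inv_mem (by simpa using hxE) ⟨⟨_, hsum⟩, rfl⟩
  rw [← h2, ← extendScalars_adjoin hle]
  exact Module.finrank_mul_finrank F E (extendScalars hle)

end IntermediateField

theorem IsPrimitiveRoot.ofReal_ne {ζ : ℂ} {n : ℕ} (h : IsPrimitiveRoot ζ n) (hn : 2 < n)
    (r : ℝ) : (r : ℂ) ≠ ζ := by
  rintro rfl
  have habs : |r| = 1 := by simpa using h.norm'_eq_one (by omega)
  have hsq : (r : ℂ) ^ 2 = 1 := by norm_cast; rw [← sq_abs, habs, one_pow]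
  have := Nat.le_of_dvd two_pos (h.dvd_of_pow_eq_one 2 hsq)
  omega

theorem finrank_adjoin_cos_two_pi_mul_div {n a : ℕ} (hn : 2 < n) (ha : a.Coprime n) :
    Module.finrank ℚ ℚ⟮cos (2 * π * a / n)⟯ = n.totient / 2 := by
  set θ := 2 * π * a / n
  set ζ : ℂ := Complex.exp (θ * Complex.I)
  have hζ : IsPrimitiveRoot ζ n := by
    convert Complex.isPrimitiveRoot_exp_of_coprime a n (by omega) ha using 2
    push_cast [θ]
    ring
  set f : ℝ →ₐ[ℚ] ℂ := Complex.ofRealAm.restrictScalars ℚ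
  have hcos : f (cos θ) = (ζ + ζ⁻¹) / 2 := by
    simp only [f, ζ, AlgHom.restrictScalars_apply, Complex.ofRealAm_coe, Complex.ofReal_cos,
      Complex.cos, ← Complex.exp_neg, neg_mul]
  have hζE : ζ ∉ ℚ⟮f (cos θ)⟯ := by
    rw [← Set.image_singleton, ← adjoin_map]
    rintro ⟨y, -, hy⟩
    exact hζ.ofReal_ne hn y hy
  have hsum : ζ + ζ⁻¹ ∈ ℚ⟮f (cos θ)⟯ := by
    rw [show ζ + ζ⁻¹ = 2 * f (cos θ) by rw [hcos]; ring]
    exact mul_mem (by exact_mod_cast IntermediateField.natCast_mem _ 2)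
      (mem_adjoin_simple_self ℚ _)
  have hle : ℚ⟮f (cos θ)⟯ ≤ ℚ⟮ζ⟯ := by
    rw [adjoin_simple_le_iff, hcos]
    have hζmem := mem_adjoin_simple_self ℚ ζ
    exact div_mem (add_mem hζmem (inv_mem hζmem))
      (by exact_mod_cast IntermediateField.natCast_mem _ 2)
  have hζdeg : Module.finrank ℚ ℚ⟮ζ⟯ = n.totient := by
    rw [adjoin.finrank ((hζ.isIntegral (by omega)).tower_top),
      ← cyclotomic_eq_minpoly_rat hζ (by omega), natDegree_cyclotomic]
  have := finrank_mul_two_of_add_inv_mem hζE hsum hle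
  rw [← finrank_adjoin_simple_map f]
  omega

theorem finrank_adjoin_cos_two_pi_mul_rat (r : ℚ) (hr : 2 < r.den) :
    Module.finrank ℚ ℚ⟮cos (2 * π * r)⟯ = r.den.totient / 2 := by
  have hcos : cos (2 * π * r) = cos (2 * π * r.num.natAbs / r.den) := by
    rw [← cos_abs, Rat.cast_def, ← mul_div_assoc, abs_div, abs_mul, abs_of_pos two_pi_pos,
      Nat.abs_cast, Nat.cast_natAbs, Int.cast_abs]
  rw [hcos]
  exact finrank_adjoin_cos_two_pi_mul_div hr r.reduced

theorem two_lt_four_mul_div_gcd {q : ℕ} (hq : 2 < q) (hq4 : q ≠ 4) :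
    2 < 4 * q / Int.gcd (4 * q) (4 - (q : ℤ)) := by
  set g := Int.gcd (4 * q) (4 - (q : ℤ))
  have hg : g ≤ (4 - (q : ℤ)).natAbs := Nat.gcd_le_right _ (by omega)
  have hdvd : g ∣ (4 * (q : ℤ)).natAbs := Nat.gcd_dvd_left _ _
  rw [show (4 * (q : ℤ)).natAbs = 4 * q by omega] at hdvd
  have hmul : 4 * q / g * g = 4 * q := Nat.div_mul_cancel hdvd
  by_contra! h
  have := Nat.mul_le_mul_right g h
  omega

theorem sin_field_degree (q : ℕ) (hq : 2 < q) (hq4 : q ≠ 4) (K : IntermediateField ℚ ℝ)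
    (hK : K = adjoin ℚ {Real.sin (2 * π / q)}) :
    Module.finrank ℚ K = Nat.totient (4 * q / Int.gcd (4 * q) (4 - (q : ℤ))) / 2 := by
  set r : ℚ := Rat.divInt (q - 4) (4 * q)
  have hden : r.den = 4 * q / Int.gcd (4 * q) (4 - (q : ℤ)) := by
    rw [Rat.den_divInt, if_neg (by omega), ← Int.gcd_neg, neg_sub]
    congr 1
  have hsin : sin (2 * π / q) = cos (2 * π * r) := by
    rw [← cos_pi_div_two_sub]
    congr 1
    push_cast [r, Rat.divInt_eq_div]
    field_simp
    ring
  rw [hK, hsin, finrank_adjoin_cos_two_pi_mul_rat r (hden ▸ two_lt_four_mul_div_gcd hq hq4), hden]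
end

section
/- If q is a positive integer divisible by 4, then Q(tan²(π/q)) = Q(tan(π/q)). -/
open Real IntermediateField

/-! The tangent addition formula shows by induction that `tan (n * x) = tan x * a` with
`a ∈ ℚ⟮tan x ^ 2⟯`, since `tan` is odd. For `x = π / (4 * m)` and `n = m` the left side is
`tan (π / 4) = 1`, so `tan x = a⁻¹ ∈ ℚ⟮tan x ^ 2⟯`. -/

theorem Real.tan_add_of_cos_ne_zero {x y : ℝ} (hx : cos x ≠ 0) (hy : cos y ≠ 0) :
    tan (x + y) = (tan x + tan y) / (1 - tan x * tan y) := by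
  simp only [tan_eq_sin_div_cos, sin_add, cos_add]
  rw [div_add_div _ _ hx hy, div_mul_div_comm, one_sub_div (mul_ne_zero hx hy),
    div_div_div_cancel_right₀ (mul_ne_zero hx hy)]

theorem Real.exists_tan_nat_mul_eq_tan_mul {x : ℝ} {n : ℕ} (hx : cos x ≠ 0)
    (hn : ∀ k < n, cos (k * x) ≠ 0) :
    ∃ a ∈ ℚ⟮tan x ^ 2⟯, tan (n * x) = tan x * a := by
  induction n with
  | zero => exact ⟨0, zero_mem _, by simp⟩
  | succ n ih =>
    obtain ⟨a, ha, htan⟩ := ih fun k hk ↦ hn k (by omega)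
    have ht2 : tan x ^ 2 ∈ ℚ⟮tan x ^ 2⟯ := mem_adjoin_simple_self ℚ _
    refine ⟨(a + 1) / (1 - a * tan x ^ 2), div_mem (add_mem ha (one_mem _))
      (sub_mem (one_mem _) (mul_mem ha ht2)), ?_⟩
    rw [Nat.cast_succ, add_one_mul, tan_add_of_cos_ne_zero (hn n n.lt_succ_self) hx, htan]
    ring

theorem tan_sq_field_eq (q : ℕ) (hq : 0 < q) (h4 : 4 ∣ q) :
    adjoin ℚ {Real.tan (π / q) ^ 2} = adjoin ℚ {Real.tan (π / q)} := by
  obtain ⟨m, rfl⟩ := h4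
  set θ := π / ↑(4 * m)
  have hm : (m : ℝ) ≠ 0 := by norm_cast; omega
  have hmθ : m * θ = π / 4 := by
    push_cast [θ]; field_simp
  have hcos : ∀ k ≤ m, cos (k * θ) ≠ 0 := fun k hk ↦ by
    have : (k : ℝ) * θ ≤ m * θ := by gcongr
    have : 0 ≤ (k : ℝ) * θ := by positivity
    exact (cos_pos_of_mem_Ioo ⟨by linarith [pi_pos], by linarith [pi_pos]⟩).ne'
  obtain ⟨a, ha, h⟩ := exists_tan_nat_mul_eq_tan_mul (n := m)
    (by simpa using hcos 1 (by omega)) fun k hk ↦ hcos k hk.le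
  rw [hmθ, tan_pi_div_four] at h
  refine le_antisymm (adjoin_simple_le_iff.2 (pow_mem (mem_adjoin_simple_self ℚ _) 2))
    (adjoin_simple_le_iff.2 ?_)
  convert inv_mem ha using 1
  exact eq_inv_of_mul_eq_one_left h.symm
end

section
/- Let λ = 2cos(π/14), which has minimal polynomial p(x) = x⁶ − 7x⁴ + 14x² − 7 over Q. Then λ⁴ + 4 = ((λ⁴ − 25)/(λ⁴ − 12))², i.e., λ⁴ + 4 is a square in the field Q(λ). -/
/-!
Since `2 cos θ ↦ 2 cos 7θ` is the Chebyshev polynomial `x⁷ - 7x⁵ + 14x³ - 7x = x p(x)` and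
`cos (7π/14) = 0`, `λ` is a root of `p`, which is irreducible by Eisenstein at `7`. The square
root is then pure algebra modulo `p`:
`(y + 4)(y - 12)² - (y - 25)² = x¹² - 21x⁸ + 98x⁴ - 49 = p(x) (x⁶ + 7x⁴ + 14x² + 7)` for `y = x⁴`.
-/

open Real Polynomial

lemma natDegree_sextic_int : (X ^ 6 - 7 * X ^ 4 + 14 * X ^ 2 - 7 : ℤ[X]).natDegree = 6 := by
  compute_degree!

lemma monic_sextic_int : (X ^ 6 - 7 * X ^ 4 + 14 * X ^ 2 - 7 : ℤ[X]).Monic := by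
  monicity!

lemma isEisensteinAt_sextic_int :
    (X ^ 6 - 7 * X ^ 4 + 14 * X ^ 2 - 7 : ℤ[X]).IsEisensteinAt (Ideal.span {7}) := by
  refine ⟨?_, fun {n} hn => ?_, ?_⟩
  · rw [monic_sextic_int.leadingCoeff, Ideal.mem_span_singleton]
    norm_num
  · rw [natDegree_sextic_int] at hn
    rw [Ideal.mem_span_singleton]
    interval_cases n <;> simp [coeff_X_pow]
  · rw [Ideal.span_singleton_pow, Ideal.mem_span_singleton]
    simp [coeff_X_pow]

lemma irreducible_sextic : Irreducible (X ^ 6 - 7 * X ^ 4 + 14 * X ^ 2 - 7 : ℚ[X]) := by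
  have hprime : (Ideal.span {(7 : ℤ)}).IsPrime :=
    (Ideal.span_singleton_prime (by norm_num)).2 (by norm_num)
  have hZ : Irreducible (X ^ 6 - 7 * X ^ 4 + 14 * X ^ 2 - 7 : ℤ[X]) :=
    isEisensteinAt_sextic_int.irreducible hprime monic_sextic_int.isPrimitive
      (by rw [natDegree_sextic_int]; norm_num)
  simpa using monic_sextic_int.irreducible_iff_irreducible_map_fraction_map.1 hZ

lemma Polynomial.Chebyshev.C_seven (R : Type*) [CommRing R] :
    C R 7 = X ^ 7 - 7 * X ^ 5 + 14 * X ^ 3 - 7 * X := by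
  have h3 := C_add_two R 1
  have h4 := C_add_two R 2
  have h5 := C_add_two R 3
  have h6 := C_add_two R 4
  have h7 := C_add_two R 5
  norm_num [C_one, C_two] at h3 h4 h5 h6 h7
  rw [h7, h6, h5, h4, h3]
  ring

lemma two_cos_pi_div_fourteen_sextic_eq_zero :
    (2 * cos (π / 14)) ^ 6 - 7 * (2 * cos (π / 14)) ^ 4 + 14 * (2 * cos (π / 14)) ^ 2 - 7 = 0 := by
  set x := 2 * cos (π / 14)
  have hx : 0 < x := by
    have : cos (π / 14) > 0 := cos_pos_of_mem_Ioo ⟨by linarith [pi_pos], by linarith [pi_pos]⟩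
    positivity
  have hC : x * (x ^ 6 - 7 * x ^ 4 + 14 * x ^ 2 - 7) = 0 := by
    have h := Chebyshev.C_two_mul_real_cos (π / 14) 7
    rw [Chebyshev.C_seven, show ((7 : ℤ) : ℝ) * (π / 14) = π / 2 by push_cast; ring,
      cos_pi_div_two] at h
    simp only [eval_sub, eval_add, eval_mul, eval_pow, eval_X, eval_ofNat] at h
    linear_combination h
  exact (mul_eq_zero.1 hC).resolve_left hx.ne'

section RootOfSextic

variable {K : Type*} [Field K] {x : K}

lemma pow_four_sub_twelve_ne_zero [CharZero K]
    (hx : x ^ 6 - 7 * x ^ 4 + 14 * x ^ 2 - 7 = 0) : x ^ 4 - 12 ≠ 0 := by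
  intro h
  have hsq : x ^ 2 = 7 / 2 := by linear_combination (hx - (x ^ 2 - 7) * h) / 26
  have : (49 / 4 : K) = 12 := by linear_combination h - (x ^ 2 + 7 / 2) * hsq
  norm_num at this

lemma pow_four_add_four_eq_sq (hx : x ^ 6 - 7 * x ^ 4 + 14 * x ^ 2 - 7 = 0)
    (h12 : x ^ 4 - 12 ≠ 0) : x ^ 4 + 4 = ((x ^ 4 - 25) / (x ^ 4 - 12)) ^ 2 := by
  field_simp
  linear_combination (x ^ 6 + 7 * x ^ 4 + 14 * x ^ 2 + 7) * hx

end RootOfSextic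

theorem lambda14_square (lam : ℝ) (hlam : lam = 2 * Real.cos (π / 14)) :
    minpoly ℚ lam = X ^ 6 - 7 * X ^ 4 + 14 * X ^ 2 - 7 ∧
    lam ^ 4 - 12 ≠ 0 ∧
    lam ^ 4 + 4 = ((lam ^ 4 - 25) / (lam ^ 4 - 12)) ^ 2 := by
  have hroot : lam ^ 6 - 7 * lam ^ 4 + 14 * lam ^ 2 - 7 = 0 :=
    hlam ▸ two_cos_pi_div_fourteen_sextic_eq_zero
  have h12 := pow_four_sub_twelve_ne_zero hroot
  refine ⟨?_, h12, pow_four_add_four_eq_sq hroot h12⟩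
  refine (minpoly.eq_of_irreducible_of_monic irreducible_sextic ?_ (by monicity!)).symm
  simp only [map_sub, map_add, map_mul, map_pow, aeval_X, map_ofNat]
  exact hroot
end

section
/- Let λ = 2cos(π/18), with minimal polynomial x⁶ − 6x⁴ + 9x² − 3 over Q. Let δ = 1 + 4λ⁴. Then √δ = (3δ + 37)/(δ − 33), i.e., δ is a square in Q(λ²) with (3δ + 37)² = δ(δ − 33)² and δ − 33 > 0 gives the appropriate sign. -/
/-!
By the triple-angle formula, `λ = 2 cos (π/18)` satisfies `λ³ - 3λ = 2 cos (π/6) = √3`, and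
squaring gives `λ⁶ - 6λ⁴ + 9λ² - 3 = 0`; this sextic is Eisenstein at `3`, hence it is the
minimal polynomial. The identity `(3δ + 37)² = δ (δ - 33)²` is then a polynomial identity in `λ`
modulo the sextic. Finally `π/18 < π/6` gives `λ > √3`, so `δ > 1 + 4 · 9 > 33`, and
`(3δ + 37)/(δ - 33)` is the nonnegative square root of `δ`.
-/

open Real Polynomial

noncomputable def lambda18Poly (R : Type*) [CommRing R] : R[X] :=
  X ^ 6 - 6 * X ^ 4 + 9 * X ^ 2 - 3

section lambda18Poly

variable (R : Type*) [CommRing R]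

lemma lambda18Poly_monic : (lambda18Poly R).Monic := by
  unfold lambda18Poly; monicity!

lemma natDegree_lambda18Poly [Nontrivial R] : (lambda18Poly R).natDegree = 6 := by
  unfold lambda18Poly; compute_degree!

lemma map_lambda18Poly (S : Type*) [CommRing S] (f : R →+* S) :
    (lambda18Poly R).map f = lambda18Poly S := by
  simp [lambda18Poly]

end lambda18Poly

lemma irreducible_lambda18Poly_int : Irreducible (lambda18Poly ℤ) := by
  have hdeg : (lambda18Poly ℤ).degree = 6 := by
    rw [degree_eq_natDegree (lambda18Poly_monic ℤ).ne_zero, natDegree_lambda18Poly]; rfl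
  refine irreducible_of_eisenstein_criterion (P := Ideal.span {(3 : ℤ)})
    ((Ideal.span_singleton_prime (by norm_num)).mpr Int.prime_three) ?_ ?_ (by rw [hdeg]; norm_num)
    ?_ (lambda18Poly_monic ℤ).isPrimitive
  · rw [(lambda18Poly_monic ℤ).leadingCoeff, Ideal.mem_span_singleton]; norm_num
  · intro n hn
    rw [hdeg, Nat.cast_lt_ofNat] at hn
    rw [Ideal.mem_span_singleton]
    interval_cases n <;> simp [lambda18Poly]
  · rw [Ideal.span_singleton_pow, Ideal.mem_span_singleton]
    simp [lambda18Poly]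

lemma irreducible_lambda18Poly_rat : Irreducible (lambda18Poly ℚ) := by
  rw [← map_lambda18Poly ℤ ℚ (Int.castRingHom ℚ)]
  exact (IsPrimitive.Int.irreducible_iff_irreducible_map_cast
    (lambda18Poly_monic ℤ).isPrimitive).mp irreducible_lambda18Poly_int

lemma aeval_lambda18Poly {A : Type*} [CommRing A] [Algebra ℚ A] (x : A) :
    aeval x (lambda18Poly ℚ) = x ^ 6 - 6 * x ^ 4 + 9 * x ^ 2 - 3 := by
  simp only [lambda18Poly, map_sub, map_add, map_mul, map_pow, aeval_X, map_ofNat]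

lemma minpoly_eq_lambda18Poly {A : Type*} [Ring A] [Nontrivial A] [Algebra ℚ A] {x : A}
    (hx : aeval x (lambda18Poly ℚ) = 0) : minpoly ℚ x = lambda18Poly ℚ :=
  (minpoly.eq_of_irreducible_of_monic irreducible_lambda18Poly_rat hx
    (lambda18Poly_monic ℚ)).symm

lemma two_cos_three_mul (θ : ℝ) : 2 * cos (3 * θ) = (2 * cos θ) ^ 3 - 3 * (2 * cos θ) := by
  rw [cos_three_mul]; ring

lemma two_cos_pi_div_eighteen_cube_sub :
    (2 * cos (π / 18)) ^ 3 - 3 * (2 * cos (π / 18)) = √3 := by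
  rw [← two_cos_three_mul, show 3 * (π / 18) = π / 6 by ring, cos_pi_div_six]; ring

lemma three_lt_sq_two_cos_pi_div_eighteen : 3 < (2 * cos (π / 18)) ^ 2 := by
  have h : cos (π / 6) < cos (π / 18) :=
    cos_lt_cos_of_nonneg_of_le_pi (by positivity) (by linarith [pi_pos]) (by linarith [pi_pos])
  rw [cos_pi_div_six] at h
  exact (sqrt_lt' (by linarith [sqrt_nonneg 3])).mp (by linarith)

lemma two_cos_pi_div_eighteen_sextic :
    (2 * cos (π / 18)) ^ 6 - 6 * (2 * cos (π / 18)) ^ 4 + 9 * (2 * cos (π / 18)) ^ 2 - 3 = 0 := by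
  have h := two_cos_pi_div_eighteen_cube_sub
  have h3 : √3 ^ 2 = 3 := sq_sqrt (by norm_num)
  linear_combination ((2 * cos (π / 18)) ^ 3 - 3 * (2 * cos (π / 18)) + √3) * h + h3

lemma sq_three_mul_add_eq_of_sextic {R : Type*} [CommRing R] {x δ : R}
    (hx : x ^ 6 - 6 * x ^ 4 + 9 * x ^ 2 - 3 = 0) (hδ : δ = 1 + 4 * x ^ 4) :
    (3 * δ + 37) ^ 2 = δ * (δ - 33) ^ 2 := by
  subst hδ
  linear_combination (-64 * x ^ 6 - 384 * x ^ 4 - 576 * x ^ 2 - 192) * hx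

lemma Real.sqrt_eq_div_of_sq_eq_mul_sq {a b c : ℝ} (ha : 0 ≤ a) (hc : 0 < c)
    (h : a ^ 2 = b * c ^ 2) : √b = a / c := by
  rw [← sqrt_sq (div_nonneg ha hc.le), div_pow, h, mul_div_cancel_right₀ _ (by positivity)]

theorem lambda18_delta_square (lam : ℝ) (hlam : lam = 2 * Real.cos (π / 18))
    (δ : ℝ) (hδ : δ = 1 + 4 * lam ^ 4) :
    minpoly ℚ lam = X ^ 6 - 6 * X ^ 4 + 9 * X ^ 2 - 3 ∧
    Real.sqrt δ = (3 * δ + 37) / (δ - 33) ∧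
    (3 * δ + 37) ^ 2 = δ * (δ - 33) ^ 2 ∧
    δ - 33 > 0 := by
  subst hlam
  have hsq := sq_three_mul_add_eq_of_sextic two_cos_pi_div_eighteen_sextic hδ
  have hpos : δ - 33 > 0 := by
    nlinarith [three_lt_sq_two_cos_pi_div_eighteen]
  refine ⟨minpoly_eq_lambda18Poly ?_, ?_, hsq, hpos⟩
  · rw [aeval_lambda18Poly]; exact two_cos_pi_div_eighteen_sextic
  · exact Real.sqrt_eq_div_of_sq_eq_mul_sq (by nlinarith) hpos hsq
end
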